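/- arXiv:1210.0521 — 2 statements merged into one kernel-verified Lean document; each statement's English description precedes it below -/
import Mathlib

section
/- Let f : I → I be a continuous interval map, J ⊆ I the Julia set (or any compact invariant set) on which f acts topologically exactly (for every open U intersecting J there is N with f^n(U) ⊇ J for all n ≥ N). Let x₀ ∈ J be such that (x₀, +∞) intersects J. Then for every open interval U intersecting J and every sufficiently large n, there exists y ∈ U with f^n(y) = x₀ such that for every ε > 0 the set f^n(B(y,ε)) intersects (x₀, +∞). -/
open Set Metric

lemma aux1 (a b : ℝ) (g : ℝ → ℝ) (hg : ContinuousOn g (Set.Icc a b))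
    (x₀ y w : ℝ) (hy : y ∈ Set.Icc a b) (hw : w ∈ Set.Icc a b)
    (hyw : y < w) (hgy : g y = x₀) (hgw : x₀ < g w) :
    ∃ y' ∈ Set.Icc y w, g y' = x₀ ∧
      ∀ ε : ℝ, 0 < ε → ∃ t ∈ Metric.ball y' ε ∩ Set.Icc a b, x₀ < g t := by
  set Z : Set ℝ := Set.Icc y w ∩ g ⁻¹' {x₀} with hZ
  have hsub : Set.Icc y w ⊆ Set.Icc a b := Set.Icc_subset_Icc hy.1 hw.2
  have hgc : ContinuousOn g (Set.Icc y w) := hg.mono hsub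
  have hZclosed : IsClosed Z := hgc.preimage_isClosed_of_isClosed isClosed_Icc isClosed_singleton
  have hyZ : y ∈ Z := ⟨⟨le_refl y, hyw.le⟩, hgy⟩
  have hZne : Z.Nonempty := ⟨y, hyZ⟩
  have hZbdd : BddAbove Z := ⟨w, fun t ht => ht.1.2⟩
  set y' := sSup Z with hy'
  have hy'Z : y' ∈ Z := hZclosed.csSup_mem hZne hZbdd
  have hy'lt : y' < w := lt_of_le_of_ne hy'Z.1.2 (by
    intro h; rw [h] at hy'Z; exact absurd hy'Z.2 (by simp; linarith))
  refine ⟨y', hy'Z.1, hy'Z.2, fun ε hε => ?_⟩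
  set t := min (y' + ε / 2) ((y' + w) / 2) with ht
  have hty' : y' < t := lt_min (by linarith) (by linarith)
  have htw : t < w := lt_of_le_of_lt (min_le_right _ _) (by linarith)
  have htI : t ∈ Set.Icc y w := ⟨le_trans hy'Z.1.1 hty'.le, htw.le⟩
  refine ⟨t, ⟨?_, hsub htI⟩, ?_⟩
  · rw [Metric.mem_ball, Real.dist_eq, abs_lt]
    constructor <;> [linarith [min_le_left (y' + ε / 2) ((y' + w) / 2)];
      linarith [min_le_left (y' + ε / 2) ((y' + w) / 2)]]
  · by_contra h
    push_neg at h
    have hne : g t ≠ x₀ := by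
      intro he
      have : t ∈ Z := ⟨htI, he⟩
      exact absurd (le_csSup hZbdd this) (not_le.2 hty')
    have hlt : g t < x₀ := lt_of_le_of_ne h hne
    obtain ⟨s, hsI, hgs⟩ := intermediate_value_Icc htw.le
      (hgc.mono (Set.Icc_subset_Icc htI.1 le_rfl)) (⟨hlt.le, hgw.le⟩ : x₀ ∈ Set.Icc (g t) (g w))
    have : s ∈ Z := ⟨⟨le_trans htI.1 hsI.1, hsI.2⟩, hgs⟩
    exact absurd (le_csSup hZbdd this) (not_le.2 (lt_of_lt_of_le hty' hsI.1))

lemma aux2 (a b : ℝ) (g : ℝ → ℝ) (hg : ContinuousOn g (Set.Icc a b))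
    (x₀ y w : ℝ) (hy : y ∈ Set.Icc a b) (hw : w ∈ Set.Icc a b)
    (hwy : w < y) (hgy : g y = x₀) (hgw : x₀ < g w) :
    ∃ y' ∈ Set.Icc w y, g y' = x₀ ∧
      ∀ ε : ℝ, 0 < ε → ∃ t ∈ Metric.ball y' ε ∩ Set.Icc a b, x₀ < g t := by
  set Z : Set ℝ := Set.Icc w y ∩ g ⁻¹' {x₀} with hZ
  have hsub : Set.Icc w y ⊆ Set.Icc a b := Set.Icc_subset_Icc hw.1 hy.2
  have hgc : ContinuousOn g (Set.Icc w y) := hg.mono hsub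
  have hZclosed : IsClosed Z := hgc.preimage_isClosed_of_isClosed isClosed_Icc isClosed_singleton
  have hyZ : y ∈ Z := ⟨⟨hwy.le, le_refl y⟩, hgy⟩
  have hZne : Z.Nonempty := ⟨y, hyZ⟩
  have hZbdd : BddBelow Z := ⟨w, fun t ht => ht.1.1⟩
  set y' := sInf Z with hy'
  have hy'Z : y' ∈ Z := hZclosed.csInf_mem hZne hZbdd
  have hy'gt : w < y' := lt_of_le_of_ne hy'Z.1.1 (by
    intro h; rw [← h] at hy'Z; exact absurd hy'Z.2 (by simp; linarith))
  refine ⟨y', hy'Z.1, hy'Z.2, fun ε hε => ?_⟩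
  set t := max (y' - ε / 2) ((w + y') / 2) with ht
  have hty' : t < y' := max_lt (by linarith) (by linarith)
  have htw : w < t := lt_of_lt_of_le (by linarith) (le_max_right _ _)
  have htI : t ∈ Set.Icc w y := ⟨htw.le, le_trans hty'.le hy'Z.1.2⟩
  refine ⟨t, ⟨?_, hsub htI⟩, ?_⟩
  · rw [Metric.mem_ball, Real.dist_eq, abs_lt]
    constructor <;> [linarith [le_max_left (y' - ε / 2) ((w + y') / 2)];
      linarith [le_max_left (y' - ε / 2) ((w + y') / 2)]]
  · by_contra h
    push_neg at h
    have hne : g t ≠ x₀ := by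
      intro he
      have : t ∈ Z := ⟨htI, he⟩
      exact absurd (csInf_le hZbdd this) (not_le.2 hty')
    have hlt : g t < x₀ := lt_of_le_of_ne h hne
    obtain ⟨s, hsI, hgs⟩ := intermediate_value_Icc' htw.le
      (hgc.mono (Set.Icc_subset_Icc le_rfl htI.2)) (⟨hlt.le, hgw.le⟩ : x₀ ∈ Set.Icc (g t) (g w))
    have : s ∈ Z := ⟨⟨hsI.1, le_trans hsI.2 htI.2⟩, hgs⟩
    exact absurd (csInf_le hZbdd this) (not_le.2 (lt_of_le_of_lt hsI.2 hty'))

/-- One-sided covering of preimages for a topologically exact interval map: if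
`(x₀, +∞)` meets `J`, then for every open interval `U` meeting `J` and all large
`n` there is an `n`-th preimage `y ∈ U` of `x₀` such that every `f^n`-image of a
ball around `y` meets `(x₀, +∞)`. -/
theorem stmt16 (a b : ℝ) (hab : a < b) (f : ℝ → ℝ)
    (hf : ContinuousOn f (Set.Icc a b))
    (hmaps : Set.MapsTo f (Set.Icc a b) (Set.Icc a b))
    (J : Set ℝ) (hJI : J ⊆ Set.Icc a b) (hJc : IsCompact J)
    (hJinv : Set.MapsTo f J J)
    (hexact : ∀ U : Set ℝ, IsOpen U → (U ∩ J).Nonempty →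
      ∃ N : ℕ, ∀ n ≥ N, J ⊆ f^[n] '' (U ∩ Set.Icc a b))
    (x₀ : ℝ) (hx₀ : x₀ ∈ J) (hright : (Set.Ioi x₀ ∩ J).Nonempty) :
    ∀ U : Set ℝ, IsOpen U → (U ∩ J).Nonempty →
      ∃ N : ℕ, ∀ n ≥ N, ∃ y ∈ U ∩ Set.Icc a b,
        f^[n] y = x₀ ∧
        ∀ ε : ℝ, 0 < ε →
          (f^[n] '' (Metric.ball y ε ∩ Set.Icc a b) ∩ Set.Ioi x₀).Nonempty := by
  obtain ⟨z, hz, hzJ⟩ := hright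
  intro U hU hUJ
  obtain ⟨p, hpU, hpJ⟩ := hUJ
  obtain ⟨δ, hδ, hδU⟩ := Metric.isOpen_iff.1 hU p hpU
  obtain ⟨N, hN⟩ := hexact (Metric.ball p δ) Metric.isOpen_ball
    ⟨p, Metric.mem_ball_self hδ, hpJ⟩
  refine ⟨N, fun n hn => ?_⟩
  obtain ⟨y, ⟨hyV, hyI⟩, hyx⟩ := hN n hn hx₀
  obtain ⟨w, ⟨hwV, hwI⟩, hwz⟩ := hN n hn hzJ
  have hgw : x₀ < f^[n] w := hwz ▸ hz
  have hgc : ContinuousOn f^[n] (Set.Icc a b) := hf.iterate hmaps n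
  have hconn := (convex_ball p δ).ordConnected
  rcases lt_trichotomy y w with h | h | h
  · obtain ⟨y', hy'I, hgy', hball⟩ := aux1 a b f^[n] hgc x₀ y w hyI hwI h hyx hgw
    refine ⟨y', ⟨hδU (hconn.out hyV hwV hy'I),
      Set.Icc_subset_Icc hyI.1 hwI.2 hy'I⟩, hgy', fun ε hε => ?_⟩
    obtain ⟨t, ⟨htb, htI⟩, htgt⟩ := hball ε hε
    exact ⟨f^[n] t, ⟨t, ⟨htb, htI⟩, rfl⟩, htgt⟩
  · exact absurd (h ▸ hyx) (ne_of_lt hgw).symm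
  · obtain ⟨y', hy'I, hgy', hball⟩ := aux2 a b f^[n] hgc x₀ y w hyI hwI h hyx hgw
    refine ⟨y', ⟨hδU (hconn.out hwV hyV hy'I),
      Set.Icc_subset_Icc hwI.1 hyI.2 hy'I⟩, hgy', fun ε hε => ?_⟩
    obtain ⟨t, ⟨htb, htI⟩, htgt⟩ := hball ε hε
    exact ⟨f^[n] t, ⟨t, ⟨htb, htI⟩, rfl⟩, htgt⟩
end

section
/- Let f : I → I be a C¹ interval map with finitely many critical points (points where Df = 0). Then there exists ε > 0 such that: for every interval J' ⊆ I sharing an endpoint with I and satisfying |J'| ≤ ε, and every connected component J of f^{−1}(J'), either J shares an endpoint with I and f : J → J' is a bijection, or f maps both endpoints of J to the endpoint of J' that is not an endpoint of I. -/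
open Set Filter Topology

/-!
Choose `ε` so that no critical value of `f`, and neither `f a` nor `f b`, lies in `(a, a + ε]`,
and let `J = [p, q]` be a component of `f⁻¹[a, c]` with `c ≤ a + ε`. An endpoint of `J` lying
inside `I` is mapped to `c`, since otherwise `J` could be enlarged. Every critical point in `J` is
mapped to `a`, and at most one point of `J` is: between two of them `f` is not constant, so it has
an interior extremum of value in `(a, c]`, which is a critical point. Hence if `J` contains `a`
or `b`, that endpoint is mapped to `a`, the other one to `c`, and `J` has no interior critical
point; by Darboux `f'` has constant sign there and `f : J → [a, c]` is a bijection. Intervals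
`[c, b]` are reduced to this case by replacing `f` with `a + b - f`.
-/

theorem Set.Finite.exists_pos_disjoint_Ioc {V : Set ℝ} (hV : V.Finite) (a : ℝ) :
    ∃ ε > 0, Disjoint V (Ioc a (a + ε)) := by
  have h : ∀ v ∈ V, ∀ᶠ ε in 𝓝[>] (0 : ℝ), v ∉ Ioc a (a + ε) := by
    intro v _
    rcases le_or_gt v a with hva | hva
    · exact Eventually.of_forall fun ε hv => hv.1.not_ge hva
    · filter_upwards [Ioo_mem_nhdsGT (sub_pos.2 hva)] with ε hε hv
      linarith [hε.2, hv.2]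
  obtain ⟨ε, hε, hV⟩ := ((hV.eventually_all.2 h).and self_mem_nhdsWithin).exists
  exact ⟨ε, hV, disjoint_left.2 hε⟩

theorem connectedComponentIn_eq_Icc {S : Set ℝ} {x : ℝ} (hS : IsCompact S) (hx : x ∈ S) :
    connectedComponentIn S x =
      Icc (sInf (connectedComponentIn S x)) (sSup (connectedComponentIn S x)) := by
  refine eq_Icc_of_connected_compact (isConnected_connectedComponentIn_iff.2 hx)
    (hS.of_isClosed_subset ?_ (connectedComponentIn_subset S x))
  rw [← closure_subset_iff_isClosed]
  exact isPreconnected_connectedComponentIn.closure.subset_connectedComponentIn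
    (subset_closure (mem_connectedComponentIn hx))
    (hS.isClosed.closure_subset_iff.2 (connectedComponentIn_subset S x))

section Component

variable {S : Set ℝ} {x p q : ℝ}

theorem notMem_nhdsLE_of_connectedComponentIn_eq_Icc
    (hJ : connectedComponentIn S x = Icc p q) (hpq : p ≤ q) : S ∉ 𝓝[≤] p := by
  intro hS
  obtain ⟨l, hl, hlS⟩ := mem_nhdsLE_iff_exists_Icc_subset.1 hS
  have hsub : Icc l p ⊆ connectedComponentIn S x := by
    rw [connectedComponentIn_eq (hJ ▸ left_mem_Icc.2 hpq : p ∈ connectedComponentIn S x)]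
    exact isPreconnected_Icc.subset_connectedComponentIn (right_mem_Icc.2 hl.le) hlS
  exact ((hJ ▸ hsub (left_mem_Icc.2 hl.le)) : l ∈ Icc p q).1.not_gt hl

theorem notMem_nhdsGE_of_connectedComponentIn_eq_Icc
    (hJ : connectedComponentIn S x = Icc p q) (hpq : p ≤ q) : S ∉ 𝓝[≥] q := by
  intro hS
  obtain ⟨u, hu, huS⟩ := mem_nhdsGE_iff_exists_Icc_subset.1 hS
  have hsub : Icc q u ⊆ connectedComponentIn S x := by
    rw [connectedComponentIn_eq (hJ ▸ right_mem_Icc.2 hpq : q ∈ connectedComponentIn S x)]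
    exact isPreconnected_Icc.subset_connectedComponentIn (left_mem_Icc.2 hu.le) huS
  exact ((hJ ▸ hsub (right_mem_Icc.2 hu.le)) : u ∈ Icc p q).2.not_gt hu

end Component

theorem exists_mem_Ioo_isLocalExtr_ne {f : ℝ → ℝ} {u v w : ℝ} (hf : ContinuousOn f (Icc u v))
    (hfuv : f u = f v) (hw : w ∈ Icc u v) (hfw : f w ≠ f u) :
    ∃ y ∈ Ioo u v, IsLocalExtr f y ∧ f y ≠ f u := by
  have hne : (Icc u v).Nonempty := ⟨w, hw⟩
  have mem_Ioo : ∀ y ∈ Icc u v, f y ≠ f u → y ∈ Ioo u v := fun y hy hfy =>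
    ⟨hy.1.lt_of_ne (by rintro rfl; exact hfy rfl),
      hy.2.lt_of_ne (by rintro rfl; exact hfy hfuv.symm)⟩
  rcases hfw.lt_or_gt with hlt | hgt
  · obtain ⟨m, hm, hmin⟩ := isCompact_Icc.exists_isMinOn hne hf
    have hfm : f m ≠ f u := ((hmin hw).trans_lt hlt).ne
    have hmI := mem_Ioo m hm hfm
    exact ⟨m, hmI, hmin.isExtr.isLocalExtr (Icc_mem_nhds hmI.1 hmI.2), hfm⟩
  · obtain ⟨m, hm, hmax⟩ := isCompact_Icc.exists_isMaxOn hne hf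
    have hfm : f m ≠ f u := (hgt.trans_le (hmax hw)).ne'
    have hmI := mem_Ioo m hm hfm
    exact ⟨m, hmI, hmax.isExtr.isLocalExtr (Icc_mem_nhds hmI.1 hmI.2), hfm⟩

theorem exists_hasDerivAt_eq_zero_ne {f f' : ℝ → ℝ} {u v : ℝ} (huv : u < v)
    (hf : ∀ y ∈ Icc u v, HasDerivAt f (f' y) y) (hfuv : f u = f v)
    (hcrit : {y ∈ Ioo u v | f' y = 0}.Finite) :
    ∃ y ∈ Ioo u v, f' y = 0 ∧ f y ≠ f u := by
  have hcont : ContinuousOn f (Icc u v) := fun y hy => (hf y hy).continuousAt.continuousWithinAt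
  obtain ⟨w, hw, hfw⟩ : ∃ w ∈ Ioo u v, f w ≠ f u := by
    by_contra! hconst
    refine Ioo_infinite huv (hcrit.subset fun y hy => ⟨hy, ?_⟩)
    have hloc : f =ᶠ[𝓝 y] fun _ => f u := eventually_of_mem (Ioo_mem_nhds hy.1 hy.2) hconst
    exact (hf y (Ioo_subset_Icc_self hy)).unique
      ((hasDerivAt_const y (f u)).congr_of_eventuallyEq hloc)
  obtain ⟨y, hy, hextr, hfy⟩ :=
    exists_mem_Ioo_isLocalExtr_ne hcont hfuv (Ioo_subset_Icc_self hw) hfw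
  exact ⟨y, hy, hextr.hasDerivAt_eq_zero (hf y (Ioo_subset_Icc_self hy)), hfy⟩

theorem bijOn_Icc_uIcc_of_hasDerivAt_ne_zero {f f' : ℝ → ℝ} {p q : ℝ} (hpq : p ≤ q)
    (hf : ∀ y ∈ Icc p q, HasDerivAt f (f' y) y) (hf' : ∀ y ∈ Ioo p q, f' y ≠ 0) :
    BijOn f (Icc p q) (uIcc (f p) (f q)) := by
  have hcont : ContinuousOn f (Icc p q) := fun y hy => (hf y hy).continuousAt.continuousWithinAt
  have hderiv : ∀ y ∈ Ioo p q, HasDerivWithinAt f (f' y) (Ioo p q) y :=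
    fun y hy => (hf y (Ioo_subset_Icc_self hy)).hasDerivWithinAt
  rcases hasDerivWithinAt_forall_lt_or_forall_gt_of_forall_ne (convex_Ioo p q) hderiv hf'
    with hneg | hpos
  · have hanti := strictAntiOn_of_hasDerivWithinAt_neg (convex_Icc p q) hcont
      (by rwa [interior_Icc]) (by rwa [interior_Icc])
    rw [← uIcc_of_le hpq] at hcont hanti ⊢
    exact hcont.image_uIcc_of_antitoneOn hanti.antitoneOn ▸ hanti.injOn.bijOn_image
  · have hmono := strictMonoOn_of_hasDerivWithinAt_pos (convex_Icc p q) hcont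
      (by rwa [interior_Icc]) (by rwa [interior_Icc])
    rw [← uIcc_of_le hpq] at hcont hmono ⊢
    exact hcont.image_uIcc_of_monotoneOn hmono.monotoneOn ▸ hmono.injOn.bijOn_image

section IntervalMap

variable {a b c x p q : ℝ} {f f' : ℝ → ℝ}

theorem apply_eq_of_connectedComponentIn_eq_Icc (hcont : ContinuousOn f (Icc a b))
    (hmaps : MapsTo f (Icc a b) (Icc a b))
    (hJ : connectedComponentIn (Icc a b ∩ f ⁻¹' Icc a c) x = Icc p q) (hpq : p ≤ q) :
    (a < p → f p = c) ∧ (q < b → f q = c) := by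
  have hsub : ∀ y ∈ Icc p q, y ∈ Icc a b ∧ f y ∈ Icc a c := fun y hy =>
    connectedComponentIn_subset _ x (hJ ▸ hy)
  have hp := hsub p (left_mem_Icc.2 hpq)
  have hq := hsub q (right_mem_Icc.2 hpq)
  have hnhds : ∀ y ∈ Icc a b, f y < c → Icc a b ∩ f ⁻¹' Icc a c ∈ 𝓝[Icc a b] y :=
    fun y hy hfy => by
      filter_upwards [self_mem_nhdsWithin, (hcont y hy).eventually_lt_const hfy] with z hz hfz
      exact ⟨hz, (hmaps hz).1, hfz.le⟩
  refine ⟨fun hap => ?_, fun hqb => ?_⟩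
  · by_contra hne
    exact notMem_nhdsLE_of_connectedComponentIn_eq_Icc hJ hpq <|
      nhdsWithin_le_of_mem (Icc_mem_nhdsLE_of_mem ⟨hap, hp.1.2⟩)
        (hnhds p hp.1 (hp.2.2.lt_of_ne hne))
  · by_contra hne
    exact notMem_nhdsGE_of_connectedComponentIn_eq_Icc hJ hpq <|
      nhdsWithin_le_of_mem (Icc_mem_nhdsGE_of_mem ⟨hq.1.1, hqb⟩)
        (hnhds q hq.1 (hq.2.2.lt_of_ne hne))

theorem bijOn_or_apply_eq_of_connectedComponentIn_eq_Icc
    (hf : ∀ y ∈ Icc a b, HasDerivAt f (f' y) y) (hcrit : {y ∈ Icc a b | f' y = 0}.Finite)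
    (hmaps : MapsTo f (Icc a b) (Icc a b)) (hcb : c ≤ b)
    (hval : ∀ y ∈ Icc a b, f' y = 0 ∨ y = a ∨ y = b → f y ∉ Ioc a c)
    (hJ : connectedComponentIn (Icc a b ∩ f ⁻¹' Icc a c) x = Icc p q) (hpq : p ≤ q) :
    ((a ∈ Icc p q ∨ b ∈ Icc p q) ∧ BijOn f (Icc p q) (Icc a c)) ∨ (f p = c ∧ f q = c) := by
  have hsub : ∀ y ∈ Icc p q, y ∈ Icc a b ∧ f y ∈ Icc a c := fun y hy =>
    connectedComponentIn_subset _ x (hJ ▸ hy)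
  have hp := hsub p (left_mem_Icc.2 hpq)
  have hq := hsub q (right_mem_Icc.2 hpq)
  obtain ⟨hleft, hright⟩ := apply_eq_of_connectedComponentIn_eq_Icc
    (fun y hy => (hf y hy).continuousAt.continuousWithinAt) hmaps hJ hpq
  obtain rfl | hac := (hp.2.1.trans hp.2.2).eq_or_lt
  · exact Or.inr ⟨le_antisymm hp.2.2 hp.2.1, le_antisymm hq.2.2 hq.2.1⟩
  have hcritval : ∀ y ∈ Icc p q, f' y = 0 ∨ y = a ∨ y = b → f y = a := fun y hy h =>
    ((hsub y hy).2.1.eq_of_not_lt fun hlt => hval y (hsub y hy).1 h ⟨hlt, (hsub y hy).2.2⟩).symm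
  have hunique : ∀ u ∈ Icc p q, ∀ v ∈ Icc p q, u < v → f u = a → f v ≠ a := by
    intro u hu v hv huv hfu hfv
    have huvJ : Icc u v ⊆ Icc p q := Icc_subset_Icc hu.1 hv.2
    obtain ⟨y, hy, hy0, hfy⟩ := exists_hasDerivAt_eq_zero_ne huv
      (fun y hy => hf y (hsub y (huvJ hy)).1) (hfu.trans hfv.symm)
      (hcrit.subset fun y hy => ⟨(hsub y (huvJ (Ioo_subset_Icc_self hy.1))).1, hy.2⟩)
    exact hfy ((hcritval y (huvJ (Ioo_subset_Icc_self hy)) (Or.inl hy0)).trans hfu.symm)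
  have hbij : f p = a ∨ f q = a → BijOn f (Icc p q) (uIcc (f p) (f q)) := fun hend =>
    bijOn_Icc_uIcc_of_hasDerivAt_ne_zero hpq (fun y hy => hf y (hsub y hy).1) fun y hy hy0 => by
      have hfy := hcritval y (Ioo_subset_Icc_self hy) (Or.inl hy0)
      rcases hend with h | h
      · exact hunique p (left_mem_Icc.2 hpq) y (Ioo_subset_Icc_self hy) hy.1 h hfy
      · exact hunique y (Ioo_subset_Icc_self hy) q (right_mem_Icc.2 hpq) hy.2 hfy h
  rcases hp.1.1.eq_or_lt with hap | hap
  · have hfp : f p = a := hcritval p (left_mem_Icc.2 hpq) (Or.inr (Or.inl hap.symm))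
    have hqb : q < b := hq.1.2.lt_of_ne fun hqb =>
      hunique p (left_mem_Icc.2 hpq) q (right_mem_Icc.2 hpq) (by linarith) hfp
        (hcritval q (right_mem_Icc.2 hpq) (Or.inr (Or.inr hqb)))
    refine Or.inl ⟨Or.inl ⟨hap.ge, hap.le.trans hpq⟩, ?_⟩
    simpa only [hfp, hright hqb, uIcc_of_le hac.le] using hbij (Or.inl hfp)
  · rcases hq.1.2.lt_or_eq with hqb | hqb
    · exact Or.inr ⟨hleft hap, hright hqb⟩
    · have hfq : f q = a := hcritval q (right_mem_Icc.2 hpq) (Or.inr (Or.inr hqb))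
      refine Or.inl ⟨Or.inr ⟨hpq.trans hqb.le, hqb.ge⟩, ?_⟩
      simpa only [hleft hap, hfq, uIcc_of_ge hac.le] using hbij (Or.inr hfq)

theorem exists_pos_connectedComponentIn_preimage_Icc_left
    (hf : ∀ y ∈ Icc a b, HasDerivAt f (f' y) y) (hcrit : {y ∈ Icc a b | f' y = 0}.Finite)
    (hmaps : MapsTo f (Icc a b) (Icc a b)) :
    ∃ ε > 0, ∀ c ∈ Icc a b, c - a ≤ ε → ∀ x ∈ Icc a b, f x ∈ Icc a c →
      ∀ J : Set ℝ, J = connectedComponentIn (Icc a b ∩ f ⁻¹' Icc a c) x →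
        ((a ∈ J ∨ b ∈ J) ∧ BijOn f J (Icc a c)) ∨ (f (sInf J) = c ∧ f (sSup J) = c) := by
  obtain ⟨ε, hε, hdisj⟩ := ((hcrit.union (toFinite {a, b})).image f).exists_pos_disjoint_Ioc a
  refine ⟨ε, hε, fun c hc hcε x hx hfx J hJ => ?_⟩
  have hval : ∀ y ∈ Icc a b, f' y = 0 ∨ y = a ∨ y = b → f y ∉ Ioc a c := fun y hy h hfy =>
    disjoint_left.1 hdisj (mem_image_of_mem f (h.imp (fun h0 => ⟨hy, h0⟩) id))
      ⟨hfy.1, by linarith [hfy.2]⟩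
  have hcont : ContinuousOn f (Icc a b) := fun y hy => (hf y hy).continuousAt.continuousWithinAt
  have hcompact : IsCompact (Icc a b ∩ f ⁻¹' Icc a c) := isCompact_Icc.of_isClosed_subset
    (hcont.preimage_isClosed_of_isClosed isClosed_Icc isClosed_Icc) inter_subset_left
  have hJIcc := hJ ▸ connectedComponentIn_eq_Icc hcompact ⟨hx, hfx⟩
  have hxJ : x ∈ Icc (sInf J) (sSup J) := hJIcc ▸ hJ ▸ mem_connectedComponentIn ⟨hx, hfx⟩
  obtain ⟨p, q, hpq, rfl⟩ : ∃ p q, p ≤ q ∧ J = Icc p q := ⟨_, _, hxJ.1.trans hxJ.2, hJIcc⟩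
  rw [csInf_Icc hpq, csSup_Icc hpq]
  exact bijOn_or_apply_eq_of_connectedComponentIn_eq_Icc hf hcrit hmaps hc.2 hval hJ.symm hpq

theorem preimage_const_sub_Icc_eq (a b c : ℝ) (f : ℝ → ℝ) :
    (fun y => a + b - f y) ⁻¹' Icc a (a + b - c) = f ⁻¹' Icc c b := by
  ext y
  simp only [mem_preimage, mem_Icc]
  constructor <;> intro h <;> constructor <;> linarith [h.1, h.2]

theorem Set.BijOn.of_const_sub {J : Set ℝ}
    (h : BijOn (fun y => a + b - f y) J (Icc a (a + b - c))) : BijOn f J (Icc c b) := by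
  have hσ : BijOn (fun y => a + b - y) (Icc a (a + b - c)) (Icc c b) := by
    have := (sub_right_injective (b := a + b)).injOn.bijOn_image (s := Icc a (a + b - c))
    rwa [image_const_sub_Icc, sub_sub_cancel, add_sub_cancel_left] at this
  exact (hσ.comp h).congr fun y _ => by simp

theorem exists_pos_connectedComponentIn_preimage_Icc_right
    (hf : ∀ y ∈ Icc a b, HasDerivAt f (f' y) y) (hcrit : {y ∈ Icc a b | f' y = 0}.Finite)
    (hmaps : MapsTo f (Icc a b) (Icc a b)) :
    ∃ ε > 0, ∀ c ∈ Icc a b, b - c ≤ ε → ∀ x ∈ Icc a b, f x ∈ Icc c b →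
      ∀ J : Set ℝ, J = connectedComponentIn (Icc a b ∩ f ⁻¹' Icc c b) x →
        ((a ∈ J ∨ b ∈ J) ∧ BijOn f J (Icc c b)) ∨ (f (sInf J) = c ∧ f (sSup J) = c) := by
  obtain ⟨ε, hε, hleft⟩ := exists_pos_connectedComponentIn_preimage_Icc_left
    (f := fun y => a + b - f y) (f' := fun y => -f' y) (fun y hy => (hf y hy).const_sub (a + b))
    (by simpa only [neg_eq_zero] using hcrit)
    (fun y hy => ⟨by linarith [(hmaps hy).2], by linarith [(hmaps hy).1]⟩)
  refine ⟨ε, hε, fun c hc hcε x hx hfx J hJ => ?_⟩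
  rw [← preimage_const_sub_Icc_eq a b c f] at hJ
  have hgx : x ∈ (fun y => a + b - f y) ⁻¹' Icc a (a + b - c) :=
    (preimage_const_sub_Icc_eq a b c f).symm ▸ hfx
  rcases hleft (a + b - c) ⟨by linarith [hc.2], by linarith [hc.1]⟩ (by linarith) x hx hgx J hJ
    with ⟨hend, hbij⟩ | ⟨hp, hq⟩
  · exact Or.inl ⟨hend, hbij.of_const_sub⟩
  · exact Or.inr ⟨by linarith, by linarith⟩

end IntervalMap

theorem stmt17_general (a b : ℝ) (f : ℝ → ℝ) (f' : ℝ → ℝ)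
    (hf : ∀ x ∈ Set.Icc a b, HasDerivAt f (f' x) x)
    (hcrit : {x ∈ Set.Icc a b | f' x = 0}.Finite)
    (hmaps : Set.MapsTo f (Set.Icc a b) (Set.Icc a b)) :
    ∃ ε > 0,
      (∀ c ∈ Set.Icc a b, c - a ≤ ε →
        ∀ x ∈ Set.Icc a b, f x ∈ Set.Icc a c →
          ∀ J : Set ℝ, J = connectedComponentIn (Set.Icc a b ∩ f ⁻¹' Set.Icc a c) x →
            ((a ∈ J ∨ b ∈ J) ∧ Set.BijOn f J (Set.Icc a c)) ∨
            (f (sInf J) = c ∧ f (sSup J) = c)) ∧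
      (∀ c ∈ Set.Icc a b, b - c ≤ ε →
        ∀ x ∈ Set.Icc a b, f x ∈ Set.Icc c b →
          ∀ J : Set ℝ, J = connectedComponentIn (Set.Icc a b ∩ f ⁻¹' Set.Icc c b) x →
            ((a ∈ J ∨ b ∈ J) ∧ Set.BijOn f J (Set.Icc c b)) ∨
            (f (sInf J) = c ∧ f (sSup J) = c)) := by
  obtain ⟨ε₁, hε₁, hleft⟩ := exists_pos_connectedComponentIn_preimage_Icc_left hf hcrit hmaps
  obtain ⟨ε₂, hε₂, hright⟩ := exists_pos_connectedComponentIn_preimage_Icc_right hf hcrit hmaps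
  exact ⟨min ε₁ ε₂, lt_min hε₁ hε₂, fun c hc hcε => hleft c hc (hcε.trans (min_le_left _ _)),
    fun c hc hcε => hright c hc (hcε.trans (min_le_right _ _))⟩

/-- For a C¹ interval map with finitely many critical points there is `ε > 0` such
that for every subinterval `J'` sharing an endpoint with `I = [a,b]` of length at
most `ε`, each connected component `J` of `f⁻¹(J')` either shares an endpoint with
`I` and `f : J → J'` is a bijection, or `f` maps both endpoints of `J` to the
endpoint of `J'` that is not an endpoint of `I`. -/
theorem stmt17 (a b : ℝ) (hab : a < b) (f : ℝ → ℝ) (f' : ℝ → ℝ)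
    (hf : ∀ x ∈ Set.Icc a b, HasDerivAt f (f' x) x)
    (hf'c : ContinuousOn f' (Set.Icc a b))
    (hcrit : {x ∈ Set.Icc a b | f' x = 0}.Finite)
    (hmaps : Set.MapsTo f (Set.Icc a b) (Set.Icc a b)) :
    ∃ ε > 0,
      (∀ c ∈ Set.Icc a b, c - a ≤ ε →
        ∀ x ∈ Set.Icc a b, f x ∈ Set.Icc a c →
          ∀ J : Set ℝ, J = connectedComponentIn (Set.Icc a b ∩ f ⁻¹' Set.Icc a c) x →
            ((a ∈ J ∨ b ∈ J) ∧ Set.BijOn f J (Set.Icc a c)) ∨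
            (f (sInf J) = c ∧ f (sSup J) = c)) ∧
      (∀ c ∈ Set.Icc a b, b - c ≤ ε →
        ∀ x ∈ Set.Icc a b, f x ∈ Set.Icc c b →
          ∀ J : Set ℝ, J = connectedComponentIn (Set.Icc a b ∩ f ⁻¹' Set.Icc c b) x →
            ((a ∈ J ∨ b ∈ J) ∧ Set.BijOn f J (Set.Icc c b)) ∨
            (f (sInf J) = c ∧ f (sSup J) = c)) :=
  stmt17_general a b f f' hf hcrit hmaps
end
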